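/- arXiv:1607.07553 — 4 statements merged into one kernel-verified Lean document; each statement's English description precedes it below -/
import Mathlib

section
/- Let G be a finite connected simple graph, let T be a spanning tree of G rooted at some vertex with depth at most D, and let H = (H_1, …, H_N) be a T-restricted shortcut with block parameter b with respect to parts P_1, …, P_N. Then for every i, any two vertices that each lie in P_i or in a block component of H_i are joined by a path of length at most b(2D+1) inside the subgraph G[P_i]+H_i. -/
/-!
Let `F = (V, H)`. Since `H ⊆ E(T)`, two vertices in the same component of `F` are joined by
the unique `T`-path between them, which lies in `F` and has length at most `2D` (go through the
root). Now follow a walk from `P`-vertex to `P`-vertex inside `G[P]`: each time it enters a block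
component that it will visit again, jump along that component to the last visit. The resulting walk
spends at most `2D` steps in each of the at most `b` block components it meets, plus one step to
leave each of them.
-/

open SimpleGraph

/-- The edge set of the subgraph `G[P] + H`: edges of `G` with both endpoints in `P`,
together with the shortcut edges `H`. -/
def partEdges {V : Type*} (G : SimpleGraph V) (P : Set V) (H : Set (Sym2 V)) :
    Set (Sym2 V) :=
  {e | e ∈ G.edgeSet ∧ ∀ v ∈ e, v ∈ P} ∪ H

/-- The subgraph `G[P] + H` viewed as a simple graph on all of `V`. -/
def shortcutGraph {V : Type*} (G : SimpleGraph V) (P : Set V) (H : Set (Sym2 V)) :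
    SimpleGraph V :=
  SimpleGraph.fromEdgeSet (partEdges G P H)

/-- The number of block components of `H` with respect to the part `P`:
connected components of the spanning subgraph `(V, H)` that intersect `P`. -/
noncomputable def numBlocks {V : Type*} (P : Set V) (H : Set (Sym2 V)) : ℕ :=
  {C : (SimpleGraph.fromEdgeSet H).ConnectedComponent |
    ∃ v ∈ P, (SimpleGraph.fromEdgeSet H).connectedComponentMk v = C}.ncard

namespace SimpleGraph

variable {V : Type*}

theorem Walk.exists_walk_length_lt_mul_card_fibers {α : Type*} [DecidableEq α]
    {G : SimpleGraph V} (f : V → α) {L : ℕ}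
    (hf : ∀ x y, f x = f y → ∃ p : G.Walk x y, p.length ≤ L) {a b : V} (W : G.Walk a b)
    {x y : V} (hx : f x ∈ W.support.map f) (hy : f y = f b) :
    ∃ p : G.Walk x y, p.length < (W.support.map f).toFinset.card * (L + 1) := by
  induction W generalizing x with
  | nil =>
    obtain ⟨p, hp⟩ := hf x y ((List.mem_singleton.mp hx).trans hy.symm)
    exact ⟨p, by simpa using Nat.lt_succ_of_le hp⟩
  | @cons a c b hadj W ih =>
    rw [Walk.support_cons, List.map_cons, List.toFinset_cons]
    rw [Walk.support_cons, List.map_cons, List.mem_cons] at hx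
    by_cases hxW : f x ∈ W.support.map f
    · obtain ⟨p, hp⟩ := ih hxW hy
      refine ⟨p, hp.trans_le (Nat.mul_le_mul_right _ (Finset.card_le_card ?_))⟩
      exact Finset.subset_insert _ _
    · have hxa : f x = f a := hx.resolve_right hxW
      have hnew : f a ∉ (W.support.map f).toFinset := by
        rw [List.mem_toFinset, ← hxa]
        exact hxW
      obtain ⟨p₁, hp₁⟩ := hf x a hxa
      obtain ⟨p₂, hp₂⟩ := ih (List.mem_map_of_mem W.start_mem_support) hy
      refine ⟨p₁.append (Walk.cons hadj p₂), ?_⟩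
      rw [Walk.length_append, Walk.length_cons, Finset.card_insert_of_notMem hnew]
      nlinarith

theorem IsAcyclic.dist_eq_of_le {F T : SimpleGraph V} (hT : T.IsAcyclic) (hFT : F ≤ T)
    {u v : V} (h : F.Reachable u v) : F.dist u v = T.dist u v := by
  obtain ⟨p, hp, hpF⟩ := h.exists_path_of_dist
  obtain ⟨q, hq, hqT⟩ := (h.mono hFT).exists_path_of_dist
  have hpq : (⟨p.mapLe hFT, hp.mapLe hFT⟩ : T.Path u v) = ⟨q, hq⟩ :=
    (hT.subsingleton_path u v).elim _ _
  rw [← hpF, ← hqT, ← Walk.length_mapLe hFT p]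
  exact congrArg (fun r : T.Path u v => r.1.length) hpq

theorem IsTree.dist_le_of_forall_dist_le {T : SimpleGraph V} (hT : T.IsTree) {r : V} {D : ℕ}
    (hdepth : ∀ w, T.dist r w ≤ D) (u v : V) : T.dist u v ≤ 2 * D := by
  calc T.dist u v ≤ T.dist u r + T.dist r v := hT.connected.dist_triangle
    _ = T.dist r u + T.dist r v := by rw [dist_comm]
    _ ≤ 2 * D := by linarith [hdepth u, hdepth v]

end SimpleGraph

section Shortcut

variable {V : Type*} {G : SimpleGraph V} {P : Set V} {H : Set (Sym2 V)}

theorem fromEdgeSet_le_shortcutGraph : fromEdgeSet H ≤ shortcutGraph G P H :=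
  fromEdgeSet_mono Set.subset_union_right

theorem shortcutGraph_adj_of_mem {x y : V} (hx : x ∈ P) (hy : y ∈ P) (hxy : G.Adj x y) :
    (shortcutGraph G P H).Adj x y := by
  refine (fromEdgeSet_adj _).mpr ⟨Or.inl ⟨hxy, ?_⟩, hxy.ne⟩
  intro z hz
  rcases Sym2.mem_iff.mp hz with rfl | rfl
  · exact hx
  · exact hy

theorem exists_shortcutGraph_walk_support_subset (hP : (G.induce P).Connected) {x y : V}
    (hx : x ∈ P) (hy : y ∈ P) :
    ∃ W : (shortcutGraph G P H).Walk x y, ∀ z ∈ W.support, z ∈ P := by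
  let φ : G.induce P →g shortcutGraph G P H :=
    ⟨Subtype.val, fun {x y} hxy => shortcutGraph_adj_of_mem x.2 y.2 hxy⟩
  obtain ⟨W⟩ := hP.preconnected ⟨x, hx⟩ ⟨y, hy⟩
  refine ⟨W.map φ, fun z hz => ?_⟩
  obtain ⟨z, -, rfl⟩ := List.mem_map.mp ((Walk.support_map φ W) ▸ hz)
  exact z.2

theorem exists_shortcutGraph_walk_of_reachable {T : SimpleGraph V} (hT : T.IsTree) {r : V}
    {D : ℕ} (hdepth : ∀ w, T.dist r w ≤ D) (hH : H ⊆ T.edgeSet) {x y : V}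
    (h : (fromEdgeSet H).Reachable x y) :
    ∃ p : (shortcutGraph G P H).Walk x y, p.length ≤ 2 * D := by
  have hFT : fromEdgeSet H ≤ T := (fromEdgeSet_le T).mpr (Set.sdiff_subset.trans hH)
  obtain ⟨p, hp⟩ := h.exists_walk_length_eq_dist
  refine ⟨p.mapLe fromEdgeSet_le_shortcutGraph, ?_⟩
  rw [Walk.length_mapLe, hp, hT.isAcyclic.dist_eq_of_le hFT h]
  exact hT.dist_le_of_forall_dist_le hdepth x y

theorem card_blocks_le_numBlocks [Finite V] [DecidableEq (fromEdgeSet H).ConnectedComponent]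
    {l : List V} (hl : ∀ z ∈ l, z ∈ P) :
    (l.map (fromEdgeSet H).connectedComponentMk).toFinset.card ≤ numBlocks P H := by
  rw [numBlocks, ← Set.ncard_coe_finset]
  refine Set.ncard_le_ncard (fun C hC => ?_) (Set.toFinite _)
  obtain ⟨z, hz, rfl⟩ := List.mem_map.mp (List.mem_toFinset.mp hC)
  exact ⟨z, hl z hz, rfl⟩

end Shortcut

theorem stmt0_general {V : Type*} [Fintype V] (G : SimpleGraph V)
    (T : SimpleGraph V) (hT : T.IsTree)
    (r : V) (D : ℕ) (hdepth : ∀ v, T.dist r v ≤ D)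
    (N : ℕ) (P : Fin N → Set V)
    (hPconn : ∀ i, (G.induce (P i)).Connected)
    (H : Fin N → Set (Sym2 V))
    (hTres : ∀ i, H i ⊆ T.edgeSet)
    (b : ℕ) (hb : ∀ i, numBlocks (P i) (H i) ≤ b)
    (i : Fin N) (u v : V)
    (hu : u ∈ P i ∨ ∃ w ∈ P i, (SimpleGraph.fromEdgeSet (H i)).Reachable u w)
    (hv : v ∈ P i ∨ ∃ w ∈ P i, (SimpleGraph.fromEdgeSet (H i)).Reachable v w) :
    ∃ p : (shortcutGraph G (P i) (H i)).Walk u v, p.length ≤ b * (2 * D + 1) := by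
  classical
  set F := fromEdgeSet (H i)
  obtain ⟨u', hu'P, hu'⟩ : ∃ w ∈ P i, F.Reachable u w := hu.elim (⟨u, ·, .rfl⟩) id
  obtain ⟨v', hv'P, hv'⟩ : ∃ w ∈ P i, F.Reachable v w := hv.elim (⟨v, ·, .rfl⟩) id
  obtain ⟨W, hWP⟩ := exists_shortcutGraph_walk_support_subset (H := H i) (hPconn i) hu'P hv'P
  have hfibers (x y : V) (hxy : F.connectedComponentMk x = F.connectedComponentMk y) :=
    exists_shortcutGraph_walk_of_reachable (G := G) (P := P i) hT hdepth (hTres i)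
      (ConnectedComponent.exact hxy)
  obtain ⟨p, hp⟩ := W.exists_walk_length_lt_mul_card_fibers _ hfibers
    (List.mem_map.mpr ⟨u', W.start_mem_support, ConnectedComponent.sound hu'.symm⟩)
    (ConnectedComponent.sound hv')
  exact ⟨p, hp.le.trans (Nat.mul_le_mul_right _ ((card_blocks_le_numBlocks hWP).trans (hb i)))⟩

theorem stmt0 {V : Type*} [Fintype V] (G : SimpleGraph V) (hG : G.Connected)
    (T : SimpleGraph V) (hT : T.IsTree) (hTG : T ≤ G)
    (r : V) (D : ℕ) (hdepth : ∀ v, T.dist r v ≤ D)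
    (N : ℕ) (P : Fin N → Set V)
    (hPdisj : ∀ i j, i ≠ j → Disjoint (P i) (P j))
    (hPne : ∀ i, (P i).Nonempty)
    (hPconn : ∀ i, (G.induce (P i)).Connected)
    (H : Fin N → Set (Sym2 V))
    (hTres : ∀ i, H i ⊆ T.edgeSet)
    (b : ℕ) (hb : ∀ i, numBlocks (P i) (H i) ≤ b)
    (i : Fin N) (u v : V)
    (hu : u ∈ P i ∨ ∃ w ∈ P i, (SimpleGraph.fromEdgeSet (H i)).Reachable u w)
    (hv : v ∈ P i ∨ ∃ w ∈ P i, (SimpleGraph.fromEdgeSet (H i)).Reachable v w) :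
    ∃ p : (shortcutGraph G (P i) (H i)).Walk u v, p.length ≤ b * (2 * D + 1) :=
  stmt0_general G T hT r D hdepth N P hPconn H hTres b hb i u v hu hv
end

section
/- Let T be a finite tree rooted at r; for each vertex v ≠ r let e_v denote the edge joining v to its parent, and let h_v be the height of v (the maximum distance in T from v to a descendant of v). Let S be a finite family of subtrees (connected subgraphs) of T such that every edge of T lies in at most c members of S. Then there exists a function t assigning a positive integer round to every pair (e, s) with s ∈ S and e an edge of s, such that: (i) for each fixed edge e, the values t(e, s) over all s ∈ S containing e are pairwise distinct; (ii) whenever e' and e are edges of the same subtree s and the upper endpoint of e' equals the lower endpoint of e, one has t(e', s) < t(e, s); and (iii) t(e_v, s) ≤ h_v + c for every v ≠ r and every s containing e_v. In particular all rounds are at most D + c, where D is the depth of T. -/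
/-!
Schedule the edge `e_v` of a member `s` in round `h_v + ρ_v(s)`, where `ρ_v` ranks the members
of `S` containing `e_v` injectively in `{1, …, c}`. Heights drop by at least one from a vertex to
its children, so the precedence constraint holds as soon as `ρ_w(s) ≤ ρ_v(s)` whenever `s`
contains both `e_w` and `e_v`, with `v` the parent of `w`. Such ranks come from ordering the
members through `e_v` by the depth of the highest vertex they reach by climbing from `v` along
their own edges, ties broken by a fixed enumeration of `S`: climbing from `w` reaches the same
vertex as climbing from `v`, and a member through `e_w` ranked before `s` at `w` must contain
`e_v`, since otherwise its climb would stop at `v`, below the top of `s`.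
-/

open SimpleGraph

/-- `u` is a descendant of `v` in the tree `T` rooted at `r`:
`v` lies on the unique `T`-path from `r` to `u`. -/
def IsDescendant {V : Type*} (T : SimpleGraph V) (r v u : V) : Prop :=
  T.dist r u = T.dist r v + T.dist v u

open Finset

namespace Convergecast

section Rank

variable {α β : Type*} [LinearOrder β] {A : Finset α} {key : α → β} {a b : α}

def rankBy (A : Finset α) (key : α → β) (a : α) : ℕ := #{x ∈ A | key x ≤ key a}

theorem one_le_rankBy (ha : a ∈ A) : 1 ≤ rankBy A key a :=
  card_pos.2 ⟨a, mem_filter.2 ⟨ha, le_rfl⟩⟩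

theorem rankBy_le_card : rankBy A key a ≤ #A := card_filter_le _ _

theorem rankBy_lt_rankBy (hb : b ∈ A) (hab : key a < key b) : rankBy A key a < rankBy A key b :=
  card_lt_card <| (ssubset_iff_of_subset fun x hx => by
    simp only [mem_filter] at hx ⊢
    exact ⟨hx.1, hx.2.trans hab.le⟩).2
    ⟨b, mem_filter.2 ⟨hb, le_rfl⟩, fun h => (mem_filter.1 h).2.not_gt hab⟩

theorem rankBy_injOn (hkey : Set.InjOn key A) : Set.InjOn (rankBy A key) A := by
  intro a ha b hb hab
  apply hkey ha hb
  rcases lt_trichotomy (key a) (key b) with h | h | h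
  · exact absurd hab (rankBy_lt_rankBy hb h).ne
  · exact h
  · exact absurd hab (rankBy_lt_rankBy ha h).ne'

end Rank

section Climb

/- `mem a v` stands for "`a` contains the edge from `v` to its parent"; `depth` strictly
decreases along such edges, so `depth v` steps of climbing from `v` are enough. -/
variable {V α : Type*} (parent : V → V) (mem : α → V → Prop) (depth : V → ℕ)

open Classical in
noncomputable def climb (a : α) : ℕ → V → V
  | 0, v => v
  | n + 1, v => if mem a v then climb a n (parent v) else v

noncomputable def top (a : α) (v : V) : V := climb parent mem a (depth v) v

variable {parent mem depth} {a : α} {v : V}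

theorem climb_of_not_mem (h : ¬mem a v) (n : ℕ) : climb parent mem a n v = v := by
  cases n <;> simp [climb, h]

theorem top_of_not_mem (h : ¬mem a v) : top parent mem depth a v = v := climb_of_not_mem h _

variable (hdepth : ∀ a v, mem a v → depth (parent v) + 1 = depth v)
include hdepth

theorem depth_climb_le (n : ℕ) (v : V) : depth (climb parent mem a n v) ≤ depth v := by
  induction n generalizing v with
  | zero => rfl
  | succ n ih =>
    by_cases h : mem a v
    · rw [climb, if_pos h]
      have := hdepth a v h
      exact (ih _).trans (by omega)
    · rw [climb_of_not_mem h]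

theorem top_eq_top_parent (h : mem a v) :
    top parent mem depth a v = top parent mem depth a (parent v) := by
  rw [top, ← hdepth a v h, climb, if_pos h, top]

theorem depth_top_lt (h : mem a v) : depth (top parent mem depth a v) < depth v := by
  have htop : depth (top parent mem depth a (parent v)) ≤ depth (parent v) :=
    depth_climb_le hdepth _ _
  have := hdepth a v h
  rw [top_eq_top_parent hdepth h]
  omega

end Climb

section ChainRank

variable {V α : Type*} (parent : V → V) (mem : α → V → Prop) (depth : V → ℕ)
  (S : Finset α) (idx : α → ℕ)

noncomputable def chainKey (v : V) (a : α) : ℕ ×ₗ ℕ :=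
  toLex (depth (top parent mem depth a v), idx a)

open Classical in
noncomputable def chainRank (v : V) : α → ℕ :=
  rankBy {a ∈ S | mem a v} (chainKey parent mem depth idx v)

variable {parent mem depth S idx} {a : α} {v : V}

theorem one_le_chainRank (ha : a ∈ S) (hv : mem a v) :
    1 ≤ chainRank parent mem depth S idx v a :=
  one_le_rankBy (by simp [ha, hv])

theorem chainRank_le_ncard :
    chainRank parent mem depth S idx v a ≤ {a | a ∈ S ∧ mem a v}.ncard := by
  classical
  rw [← coe_filter, Set.ncard_coe_finset]
  exact rankBy_le_card

theorem chainRank_injOn (hidx : Set.InjOn idx S) :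
    Set.InjOn (chainRank parent mem depth S idx v) {a | a ∈ S ∧ mem a v} := by
  classical
  rw [← coe_filter]
  exact rankBy_injOn fun _ ha _ hb hab =>
    hidx (mem_filter.1 ha).1 (mem_filter.1 hb).1 (Prod.mk.inj (toLex.injective hab)).2

theorem chainKey_eq_chainKey_parent (hdepth : ∀ a v, mem a v → depth (parent v) + 1 = depth v)
    (h : mem a v) :
    chainKey parent mem depth idx v a = chainKey parent mem depth idx (parent v) a := by
  rw [chainKey, chainKey, top_eq_top_parent hdepth h]

theorem chainRank_le_chainRank_parent (hdepth : ∀ a v, mem a v → depth (parent v) + 1 = depth v)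
    (hv : mem a v) (hpv : mem a (parent v)) :
    chainRank parent mem depth S idx v a ≤ chainRank parent mem depth S idx (parent v) a := by
  refine card_le_card fun x hx => ?_
  simp only [mem_filter] at hx ⊢
  obtain ⟨⟨hxS, hxv⟩, hle⟩ := hx
  rw [chainKey_eq_chainKey_parent hdepth hxv, chainKey_eq_chainKey_parent hdepth hv] at hle
  refine ⟨⟨hxS, ?_⟩, hle⟩
  by_contra hxpv
  have htop := Prod.Lex.monotone_fst _ _ hle
  simp only [chainKey, top_of_not_mem hxpv] at htop
  exact htop.not_gt (depth_top_lt hdepth hpv)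

end ChainRank

theorem exists_parentEdge_ranking {V : Type*} {T : SimpleGraph V} {r : V} {parent : V → V}
    (hdist : ∀ v, v ≠ r → T.dist r (parent v) + 1 = T.dist r v) (S : Finset T.Subgraph) :
    ∃ ρ : V → T.Subgraph → ℕ,
      (∀ v, v ≠ r → ∀ s ∈ S, s(v, parent v) ∈ s.edgeSet → 1 ≤ ρ v s) ∧
      (∀ v, v ≠ r → ∀ s, ρ v s ≤ {s | s ∈ S ∧ s(v, parent v) ∈ s.edgeSet}.ncard) ∧
      (∀ v, v ≠ r → Set.InjOn (ρ v) {s | s ∈ S ∧ s(v, parent v) ∈ s.edgeSet}) ∧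
      (∀ s w, w ≠ r → parent w ≠ r → s(w, parent w) ∈ s.edgeSet →
        s(parent w, parent (parent w)) ∈ s.edgeSet → ρ w s ≤ ρ (parent w) s) := by
  classical
  let mem : T.Subgraph → V → Prop := fun s v => v ≠ r ∧ s(v, parent v) ∈ s.edgeSet
  have hmem : ∀ v, v ≠ r → {s | s ∈ S ∧ mem s v} = {s | s ∈ S ∧ s(v, parent v) ∈ s.edgeSet} :=
    fun v hv => by simp only [mem, hv, ne_eq, not_false_eq_true, true_and]
  have hidx : Set.InjOn S.toList.idxOf S :=
    fun a ha _ _ hab => (List.idxOf_inj (mem_toList.2 ha)).1 hab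
  refine ⟨chainRank parent mem (T.dist r) S S.toList.idxOf, fun v hv s hs he => ?_,
    fun v hv s => ?_, fun v hv => ?_, fun s w hw hpw he hpe => ?_⟩
  · exact one_le_chainRank hs ⟨hv, he⟩
  · exact hmem v hv ▸ chainRank_le_ncard
  · exact hmem v hv ▸ chainRank_injOn hidx
  · exact chainRank_le_chainRank_parent (fun _ v hv => hdist v hv.1) ⟨hw, he⟩ ⟨hpw, hpe⟩

theorem exists_eq_on_parentEdge {V β : Type*} {r : V} {parent : V → V}
    (hinj : ∀ v, v ≠ r → ∀ w, w ≠ r → s(v, parent v) = s(w, parent w) → v = w)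
    (f : V → β → ℕ) : ∃ t : Sym2 V → β → ℕ, ∀ v, v ≠ r → ∀ b, t s(v, parent v) b = f v b := by
  have hinj' : Function.Injective fun v : {v // v ≠ r} => s(v.1, parent v.1) :=
    fun v w hvw => Subtype.ext (hinj v.1 v.2 w.1 w.2 hvw)
  exact ⟨fun e b => Function.extend (fun v : {v // v ≠ r} => s(v.1, parent v.1))
    (fun v => f v b) 0 e, fun v hv b => hinj'.extend_apply (fun v => f v b) 0 ⟨v, hv⟩⟩

end Convergecast

theorem SimpleGraph.IsTree.eq_of_adj_of_dist_add_one {V : Type*} {T : SimpleGraph V} {r : V}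
    (hT : T.IsTree) {a b c : V} (hb : T.Adj a b) (hc : T.Adj a c)
    (hdb : T.dist r b + 1 = T.dist r a) (hdc : T.dist r c + 1 = T.dist r a) : b = c := by
  have toRoot : ∀ x, T.Adj a x → T.dist r x + 1 = T.dist r a →
      ∃ p : T.Walk a r, p.IsPath ∧ p.snd = x := by
    intro x hx hd
    obtain ⟨q, hq⟩ := hT.connected.exists_walk_length_eq_dist x r
    refine ⟨.cons hx q, (Walk.cons hx q).isPath_of_length_eq_dist ?_, by simp⟩
    rw [Walk.length_cons, hq, dist_comm, hd, dist_comm]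
  obtain ⟨p, hp, rfl⟩ := toRoot b hb hdb
  obtain ⟨q, hq, rfl⟩ := toRoot c hc hdc
  rw [(hT.existsUnique_path a r).unique hp hq]

section ParentEdge

variable {V : Type*} {T : SimpleGraph V} {r : V} {parent : V → V}
  (hparent : ∀ v, v ≠ r → T.Adj v (parent v) ∧ T.dist r (parent v) + 1 = T.dist r v)
include hparent

theorem SimpleGraph.IsTree.exists_eq_parentEdge (hT : T.IsTree) {e : Sym2 V}
    (he : e ∈ T.edgeSet) : ∃ v, v ≠ r ∧ e = s(v, parent v) := by
  have lower : ∀ a b, T.Adj a b → T.dist r b + 1 = T.dist r a → a ≠ r ∧ b = parent a := by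
    intro a b hab hd
    have har : a ≠ r := by rintro rfl; simp at hd
    exact ⟨har, hT.eq_of_adj_of_dist_add_one hab (hparent a har).1 hd (hparent a har).2⟩
  induction e with
  | h a b =>
    rcases hT.dist_eq_dist_add_one_of_adj r he with hd | hd
    · obtain ⟨ha, rfl⟩ := lower a b he hd.symm
      exact ⟨a, ha, rfl⟩
    · obtain ⟨hb, rfl⟩ := lower b a he.symm hd.symm
      exact ⟨b, hb, Sym2.eq_swap⟩

theorem eq_of_parentEdge_eq {v w : V} (hv : v ≠ r) (hw : w ≠ r)
    (hvw : s(v, parent v) = s(w, parent w)) : v = w := by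
  rcases Sym2.eq_iff.1 hvw with ⟨h, -⟩ | ⟨h₁, h₂⟩
  · exact h
  · have hv' := (hparent v hv).2
    have hw' := (hparent w hw).2
    rw [h₂] at hv'
    rw [← h₁] at hw'
    omega

end ParentEdge

section Height

variable {V : Type*} {T : SimpleGraph V} {r : V}

theorem IsDescendant.of_child (hconn : T.Connected) {v w u : V} (hu : IsDescendant T r w u)
    (hadj : T.Adj w v) (hd : T.dist r v + 1 = T.dist r w) :
    IsDescendant T r v u ∧ T.dist v u = T.dist w u + 1 := by
  have h₁ : T.dist r u ≤ T.dist r v + T.dist v u := hconn.dist_triangle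
  have h₂ : T.dist v u ≤ T.dist v w + T.dist w u := hconn.dist_triangle
  have h₃ : T.dist v w = 1 := dist_eq_one_iff_adj.2 hadj.symm
  unfold IsDescendant at *
  omega

theorem height_lt_of_child (hconn : T.Connected) {v w : V} (hadj : T.Adj w v)
    (hd : T.dist r v + 1 = T.dist r w) {m n : ℕ}
    (hhv : IsGreatest {d | ∃ u, IsDescendant T r v u ∧ d = T.dist v u} m)
    (hhw : IsGreatest {d | ∃ u, IsDescendant T r w u ∧ d = T.dist w u} n) : n < m := by
  obtain ⟨u, hu, rfl⟩ := hhw.1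
  obtain ⟨huv, hdist⟩ := hu.of_child hconn hadj hd
  have := hhv.2 ⟨u, huv, rfl⟩
  omega

theorem height_le_of_dist_le {v : V} {n D : ℕ}
    (hhv : IsGreatest {d | ∃ u, IsDescendant T r v u ∧ d = T.dist v u} n)
    (hdepth : ∀ u, T.dist r u ≤ D) : n ≤ D := by
  obtain ⟨u, hu, rfl⟩ := hhv.1
  have := hdepth u
  unfold IsDescendant at hu
  omega

end Height

open Convergecast

theorem stmt3_general {V : Type*} (T : SimpleGraph V) (hT : T.IsTree)
    (r : V) (parent : V → V)
    (hparent : ∀ v, v ≠ r → T.Adj v (parent v) ∧ T.dist r (parent v) + 1 = T.dist r v)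
    -- `h v` is the height of `v`: the maximum distance from `v` to a descendant of `v`
    (h : V → ℕ)
    (hheight : ∀ v, IsGreatest {d | ∃ u, IsDescendant T r v u ∧ d = T.dist v u} (h v))
    -- a finite family of subtrees of `T`
    (S : Finset T.Subgraph)
    -- every edge of `T` lies in at most `c` members of the family
    (c : ℕ)
    (hcong : ∀ e ∈ T.edgeSet, {s | s ∈ S ∧ e ∈ SimpleGraph.Subgraph.edgeSet s}.ncard ≤ c)
    (D : ℕ) (hdepth : ∀ v, T.dist r v ≤ D) :
    ∃ t : Sym2 V → T.Subgraph → ℕ,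
      -- rounds are positive integers
      (∀ e, ∀ s ∈ S, e ∈ SimpleGraph.Subgraph.edgeSet s → 1 ≤ t e s) ∧
      -- (i) on each fixed edge, the rounds of the subtrees containing it are pairwise distinct
      (∀ e, ∀ s ∈ S, ∀ s' ∈ S, e ∈ SimpleGraph.Subgraph.edgeSet s →
          e ∈ SimpleGraph.Subgraph.edgeSet s' → s ≠ s' → t e s ≠ t e s') ∧
      -- (ii) rounds strictly increase along each subtree towards the root:
      -- if `w` is a child of `v` then the edge below is scheduled strictly earlier
      (∀ s ∈ S, ∀ v w : V, v ≠ r → w ≠ r → parent w = v →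
          s(w, parent w) ∈ SimpleGraph.Subgraph.edgeSet s →
          s(v, parent v) ∈ SimpleGraph.Subgraph.edgeSet s →
          t s(w, parent w) s < t s(v, parent v) s) ∧
      -- (iii) the edge from `v` to its parent is scheduled by round `h v + c`
      (∀ s ∈ S, ∀ v : V, v ≠ r → s(v, parent v) ∈ SimpleGraph.Subgraph.edgeSet s →
          t s(v, parent v) s ≤ h v + c) ∧
      -- in particular, all rounds are at most `D + c`
      (∀ s ∈ S, ∀ v : V, v ≠ r → s(v, parent v) ∈ SimpleGraph.Subgraph.edgeSet s →
          t s(v, parent v) s ≤ D + c) := by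
  obtain ⟨ρ, hρ_pos, hρ_le, hρ_inj, hρ_mono⟩ :=
    exists_parentEdge_ranking (fun v hv => (hparent v hv).2) S
  obtain ⟨t, ht⟩ := exists_eq_on_parentEdge (fun v hv w hw => eq_of_parentEdge_eq hparent hv hw)
    fun v s => h v + ρ v s
  have hρc : ∀ v, v ≠ r → ∀ s, ρ v s ≤ c := fun v hv s =>
    (hρ_le v hv s).trans (hcong _ (hparent v hv).1)
  refine ⟨t, ?_, ?_, ?_, ?_, ?_⟩
  · intro e s hs he
    obtain ⟨v, hv, rfl⟩ := hT.exists_eq_parentEdge hparent (s.edgeSet_subset he)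
    rw [ht v hv]
    exact le_add_left (hρ_pos v hv s hs he)
  · intro e s hs s' hs' he he' hne heq
    obtain ⟨v, hv, rfl⟩ := hT.exists_eq_parentEdge hparent (s.edgeSet_subset he)
    rw [ht v hv, ht v hv, add_right_inj] at heq
    exact hne (hρ_inj v hv ⟨hs, he⟩ ⟨hs', he'⟩ heq)
  · rintro s - v w hv hw rfl hw' hv'
    rw [ht w hw, ht (parent w) hv]
    exact add_lt_add_of_lt_of_le
      (height_lt_of_child hT.connected (hparent w hw).1 (hparent w hw).2 (hheight _) (hheight w))
      (hρ_mono s w hw hv hw' hv')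
  · intro s _ v hv _
    rw [ht v hv]
    exact Nat.add_le_add_left (hρc v hv s) _
  · intro s _ v hv _
    rw [ht v hv]
    exact add_le_add (height_le_of_dist_le (hheight v) hdepth) (hρc v hv s)

theorem stmt3 {V : Type*} [Fintype V] (T : SimpleGraph V) (hT : T.IsTree)
    (r : V) (parent : V → V)
    (hparent : ∀ v, v ≠ r → T.Adj v (parent v) ∧ T.dist r (parent v) + 1 = T.dist r v)
    -- `h v` is the height of `v`: the maximum distance from `v` to a descendant of `v`
    (h : V → ℕ)
    (hheight : ∀ v, IsGreatest {d | ∃ u, IsDescendant T r v u ∧ d = T.dist v u} (h v))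
    -- a finite family of subtrees of `T`
    (S : Finset T.Subgraph) (hSconn : ∀ s ∈ S, SimpleGraph.Subgraph.Connected s)
    -- every edge of `T` lies in at most `c` members of the family
    (c : ℕ)
    (hcong : ∀ e ∈ T.edgeSet, {s | s ∈ S ∧ e ∈ SimpleGraph.Subgraph.edgeSet s}.ncard ≤ c)
    (D : ℕ) (hdepth : ∀ v, T.dist r v ≤ D) :
    ∃ t : Sym2 V → T.Subgraph → ℕ,
      -- rounds are positive integers
      (∀ e, ∀ s ∈ S, e ∈ SimpleGraph.Subgraph.edgeSet s → 1 ≤ t e s) ∧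
      -- (i) on each fixed edge, the rounds of the subtrees containing it are pairwise distinct
      (∀ e, ∀ s ∈ S, ∀ s' ∈ S, e ∈ SimpleGraph.Subgraph.edgeSet s →
          e ∈ SimpleGraph.Subgraph.edgeSet s' → s ≠ s' → t e s ≠ t e s') ∧
      -- (ii) rounds strictly increase along each subtree towards the root:
      -- if `w` is a child of `v` then the edge below is scheduled strictly earlier
      (∀ s ∈ S, ∀ v w : V, v ≠ r → w ≠ r → parent w = v →
          s(w, parent w) ∈ SimpleGraph.Subgraph.edgeSet s →
          s(v, parent v) ∈ SimpleGraph.Subgraph.edgeSet s →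
          t s(w, parent w) s < t s(v, parent v) s) ∧
      -- (iii) the edge from `v` to its parent is scheduled by round `h v + c`
      (∀ s ∈ S, ∀ v : V, v ≠ r → s(v, parent v) ∈ SimpleGraph.Subgraph.edgeSet s →
          t s(v, parent v) s ≤ h v + c) ∧
      -- in particular, all rounds are at most `D + c`
      (∀ s ∈ S, ∀ v : V, v ≠ r → s(v, parent v) ∈ SimpleGraph.Subgraph.edgeSet s →
          t s(v, parent v) s ≤ D + c) :=
  stmt3_general T hT r parent hparent h hheight S c hcong D hdepth
end

section
/- Let T be a finite tree rooted at r; for v ≠ r let e_v be the edge to its parent and h_v the height of v. Let S be a finite family of subtrees of T, each with an assigned distinct identifier, and order S by: s ≺ s' if the root of s (its vertex closest to r) has strictly smaller depth than the root of s', or the depths are equal and the identifier of s is smaller. Then there exists a scheduling function t as in the convergecast-schedule setting (rounds pairwise distinct on each edge, and strictly increasing along each subtree towards its root) which additionally satisfies: for every v ≠ r and every s ∈ S containing e_v, t(e_v, s) ≤ h_v + i, where i is the rank of s in the ≺-ordering of the subtrees of S that contain e_v. -/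
/-!
Schedule subtree `s` on the edge `e_v` in round `h_v + i`, where `i` is the rank of `s` among
the subtrees containing `e_v`. Ranks on one edge are distinct, so rounds are too. Along a subtree,
moving from `e_w` up to `e_v` (with `v` the parent of `w`) raises the height by at least one and
does not lower the rank: a subtree containing `e_w` but not `e_v` lies entirely below `v`, so its
root is deeper than every vertex of a subtree containing `e_v` and it comes later in the order.
-/

namespace SimpleGraph

variable {V : Type*} {G : SimpleGraph V}

lemma Walk.dist_le_length_of_mem_support {u v w : V} (p : G.Walk u w) (hv : v ∈ p.support) :
    G.dist u v ≤ p.length := by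
  classical
  exact (dist_le _).trans (p.length_takeUntil_le_length hv)

lemma Subgraph.Connected.induction_on {H : G.Subgraph} (hH : H.Connected) {P : V → Prop}
    {v u : V} (hv : v ∈ H.verts) (hu : u ∈ H.verts) (hPv : P v)
    (hstep : ∀ a c, H.Adj a c → P a → P c) : P u := by
  obtain ⟨p⟩ := hH.preconnected ⟨v, hv⟩ ⟨u, hu⟩
  suffices ∀ {a b : H.verts}, H.coe.Walk a b → P a → P b from this p hPv
  intro a b p
  induction p with
  | nil => exact id
  | cons hadj _ ih => exact fun ha ↦ ih (hstep _ _ hadj ha)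

lemma IsTree.eq_of_adj_of_dist_add_one_s4 (hG : G.IsTree) (r : V) {x y z : V}
    (hxy : G.Adj x y) (hy : G.dist r y + 1 = G.dist r x)
    (hxz : G.Adj x z) (hz : G.dist r z + 1 = G.dist r x) : y = z := by
  obtain ⟨q, hq, -⟩ := hG.connected.exists_path_of_dist r x
  have hpen : ∀ y, G.Adj x y → G.dist r y + 1 = G.dist r x → y = q.penultimate := by
    intro y hxy hy
    refine hG.isAcyclic.eq_penultimate_of_adj_end hq hxy (by_contra fun hyq ↦ ?_)
    obtain ⟨p, hp, hpl⟩ := hG.connected.exists_path_of_dist r y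
    have hx := hG.isAcyclic.mem_support_of_ne_mem_support_of_adj_of_isPath hp hq hxy.symm hyq
    have := p.dist_le_length_of_mem_support hx
    omega
  exact (hpen y hxy hy).trans (hpen z hxz hz).symm

section Rooted

/-! In this section `G` is rooted at `r`, and `G.dist r u = G.dist r v + G.dist v u` says that
`u` lies in the subtree below `v`. -/

variable {r : V} {parent : V → V}

lemma IsTree.eq_parent_of_adj (hG : G.IsTree)
    (hparent : ∀ v, v ≠ r → G.Adj v (parent v) ∧ G.dist r (parent v) + 1 = G.dist r v)
    {x y : V} (hxy : G.Adj x y) (hy : G.dist r y + 1 = G.dist r x) : y = parent x := by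
  have hx : x ≠ r := by
    rintro rfl
    simp at hy
  exact hG.eq_of_adj_of_dist_add_one_s4 r hxy hy (hparent x hx).1 (hparent x hx).2

lemma IsTree.dist_parent_of_dist_eq (hG : G.IsTree)
    (hparent : ∀ v, v ≠ r → G.Adj v (parent v) ∧ G.dist r (parent v) + 1 = G.dist r v)
    {v a : V} (ha : G.dist r a = G.dist r v + G.dist v a) (hav : a ≠ v) :
    G.dist r (parent a) = G.dist r v + G.dist v (parent a) := by
  obtain ⟨q, hql⟩ := hG.connected.exists_walk_length_eq_dist a v
  have hnil : ¬q.Nil := Walk.not_nil_of_ne hav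
  have hz : G.dist q.snd v + 1 ≤ G.dist a v := by
    have := dist_le q.tail
    have := q.length_tail_add_one hnil
    omega
  have hza : G.dist q.snd a = 1 := dist_eq_one_iff_adj.mpr (q.adj_snd hnil).symm
  have h₁ := hG.connected.dist_triangle (u := r) (v := q.snd) (w := a)
  have h₂ := hG.connected.dist_triangle (u := r) (v := v) (w := q.snd)
  have hvz : G.dist v q.snd = G.dist q.snd v := dist_comm
  have hva : G.dist v a = G.dist a v := dist_comm
  have hup : G.dist r q.snd + 1 = G.dist r a := by omega
  rw [← hG.eq_parent_of_adj hparent (q.adj_snd hnil) hup]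
  omega

lemma IsTree.dist_eq_of_adj_of_dist_eq (hG : G.IsTree)
    (hparent : ∀ v, v ≠ r → G.Adj v (parent v) ∧ G.dist r (parent v) + 1 = G.dist r v)
    {v a c : V} (ha : G.dist r a = G.dist r v + G.dist v a) (hac : G.Adj a c)
    (hne : s(a, c) ≠ s(v, parent v)) : G.dist r c = G.dist r v + G.dist v c := by
  rcases hG.dist_eq_dist_add_one_of_adj r hac with hup | hdown
  · obtain rfl := hG.eq_parent_of_adj hparent hac hup.symm
    have hav : a ≠ v := by
      rintro rfl
      exact hne rfl
    exact hG.dist_parent_of_dist_eq hparent ha hav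
  · have h₁ := hG.connected.dist_triangle (u := r) (v := v) (w := c)
    have h₂ := hG.connected.dist_triangle (u := v) (v := a) (w := c)
    have hac' : G.dist a c = 1 := dist_eq_one_iff_adj.mpr hac
    omega

lemma IsTree.mem_edgeSet_parent_of_dist_lt (hG : G.IsTree)
    (hparent : ∀ v, v ≠ r → G.Adj v (parent v) ∧ G.dist r (parent v) + 1 = G.dist r v)
    {H : G.Subgraph} (hH : H.Connected) {u v : V} (hv : v ∈ H.verts) (hu : u ∈ H.verts)
    (huv : G.dist r u < G.dist r v) : s(v, parent v) ∈ H.edgeSet := by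
  by_contra hvH
  have hbelow : G.dist r u = G.dist r v + G.dist v u :=
    hH.induction_on (P := fun u ↦ G.dist r u = G.dist r v + G.dist v u) hv hu (by simp)
      fun a c hac ha ↦ hG.dist_eq_of_adj_of_dist_eq hparent ha hac.adj_sub
        fun heq ↦ hvH (heq ▸ hac)
  omega

lemma IsTree.height_lt_height_parent (hG : G.IsTree)
    (hparent : ∀ v, v ≠ r → G.Adj v (parent v) ∧ G.dist r (parent v) + 1 = G.dist r v)
    {h : V → ℕ}
    (hheight : ∀ v, IsGreatest
      {d | ∃ u, G.dist r u = G.dist r v + G.dist v u ∧ d = G.dist v u} (h v))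
    {v : V} (hv : v ≠ r) : h v < h (parent v) := by
  obtain ⟨u, hu, hdu⟩ := (hheight v).1
  have h₁ := hG.connected.dist_triangle (u := parent v) (v := v) (w := u)
  have h₂ := hG.connected.dist_triangle (u := r) (v := parent v) (w := u)
  have hpv : G.dist (parent v) v = 1 := dist_eq_one_iff_adj.mpr (hparent v hv).1.symm
  have hdepth := (hparent v hv).2
  have := (hheight (parent v)).2 ⟨u, by omega, rfl⟩
  omega

end Rooted

end SimpleGraph

section Rank

variable {α : Type*} {p q : α → Prop} {prec : α → α → Prop}

noncomputable def rankAmong (p : α → Prop) (prec : α → α → Prop) (s : α) : ℕ :=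
  {x | p x ∧ (prec x s ∨ x = s)}.ncard

lemma rankAmong_pos (hfin : {x | p x}.Finite) {s : α} (hs : p s) : 0 < rankAmong p prec s :=
  (Set.ncard_pos (hfin.subset fun _ hx ↦ hx.1)).mpr ⟨s, hs, Or.inr rfl⟩

lemma rankAmong_mono (hfin : {x | q x}.Finite) {s : α}
    (hpq : ∀ x, p x → (prec x s ∨ x = s) → q x) : rankAmong p prec s ≤ rankAmong q prec s :=
  Set.ncard_le_ncard (fun x hx ↦ ⟨hpq x hx.1 hx.2, hx.2⟩) (hfin.subset fun _ hx ↦ hx.1)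

lemma rankAmong_lt_rankAmong [IsStrictOrder α prec] (hfin : {x | p x}.Finite) {a b : α}
    (hb : p b) (hab : prec a b) : rankAmong p prec a < rankAmong p prec b := by
  refine Set.ncard_lt_ncard ⟨?_, fun hsub ↦ ?_⟩ (hfin.subset fun _ hx ↦ hx.1)
  · rintro x ⟨hx, hxa | rfl⟩
    exacts [⟨hx, Or.inl (_root_.trans hxa hab)⟩, ⟨hx, Or.inl hab⟩]
  · rcases (hsub ⟨hb, Or.inr rfl⟩).2 with hba | rfl
    exacts [asymm hab hba, irrefl _ hab]

lemma rankAmong_injOn [IsStrictOrder α prec] (hfin : {x | p x}.Finite)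
    (htot : ∀ a b, p a → p b → a ≠ b → prec a b ∨ prec b a) :
    Set.InjOn (rankAmong p prec) {x | p x} := by
  intro a ha b hb hrank
  by_contra hab
  rcases htot a b ha hb hab with h | h
  · exact (rankAmong_lt_rankAmong hfin hb h).ne hrank
  · exact (rankAmong_lt_rankAmong hfin ha h).ne' hrank

end Rank

section LexOrder

variable {α : Type*} {prec : α → α → Prop} {f g : α → ℕ}

lemma isStrictOrder_of_iff_lex (hprec : ∀ a b, prec a b ↔ f a < f b ∨ f a = f b ∧ g a < g b) :
    IsStrictOrder α prec where
  irrefl a ha := by rw [hprec] at ha; omega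
  trans a b c hab hbc := by rw [hprec] at hab hbc ⊢; omega

lemma le_of_iff_lex (hprec : ∀ a b, prec a b ↔ f a < f b ∨ f a = f b ∧ g a < g b) {a b : α}
    (hab : prec a b ∨ a = b) : f a ≤ f b := by
  rcases hab with hab | rfl
  · rw [hprec] at hab
    omega
  · rfl

lemma prec_or_prec_of_iff_lex (hprec : ∀ a b, prec a b ↔ f a < f b ∨ f a = f b ∧ g a < g b)
    {S : Set α} (hg : S.InjOn g) {a b : α} (ha : a ∈ S) (hb : b ∈ S) (hab : a ≠ b) :
    prec a b ∨ prec b a := by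
  have := hg.ne ha hb hab
  rw [hprec, hprec]
  omega

end LexOrder

open SimpleGraph

theorem stmt4_general {V : Type*} (T : SimpleGraph V) (hT : T.IsTree)
    (r : V) (parent : V → V)
    (hparent : ∀ v, v ≠ r → T.Adj v (parent v) ∧ T.dist r (parent v) + 1 = T.dist r v)
    -- `h v` is the height of `v`: the maximum distance from `v` to a descendant of `v`
    (h : V → ℕ)
    (hheight : ∀ v, IsGreatest
      {d | ∃ u, T.dist r u = T.dist r v + T.dist v u ∧ d = T.dist v u} (h v))
    -- a finite family of subtrees of `T`
    (S : Finset T.Subgraph) (hSconn : ∀ s ∈ S, SimpleGraph.Subgraph.Connected s)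
    -- distinct identifiers
    (ident : T.Subgraph → ℕ) (hident : Set.InjOn ident ↑S)
    -- `rt s` is the root of the subtree `s`: its unique vertex of minimum depth
    (rt : T.Subgraph → V)
    (hrt : ∀ s ∈ S, rt s ∈ SimpleGraph.Subgraph.verts s ∧
      ∀ u ∈ SimpleGraph.Subgraph.verts s, T.dist r (rt s) ≤ T.dist r u) :
    -- the priority order on subtrees: smaller root depth first, ties broken by identifier
    ∀ prec : T.Subgraph → T.Subgraph → Prop,
      (∀ s s', (prec s s' ↔ T.dist r (rt s) < T.dist r (rt s') ∨
          (T.dist r (rt s) = T.dist r (rt s') ∧ ident s < ident s'))) →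
    ∃ t : Sym2 V → T.Subgraph → ℕ,
      -- rounds are positive integers
      (∀ e, ∀ s ∈ S, e ∈ SimpleGraph.Subgraph.edgeSet s → 1 ≤ t e s) ∧
      -- (i) on each fixed edge, the rounds of subtrees containing it are pairwise distinct
      (∀ e, ∀ s ∈ S, ∀ s' ∈ S, e ∈ SimpleGraph.Subgraph.edgeSet s →
          e ∈ SimpleGraph.Subgraph.edgeSet s' → s ≠ s' → t e s ≠ t e s') ∧
      -- (ii) rounds strictly increase along each subtree towards its root
      (∀ s ∈ S, ∀ v w : V, v ≠ r → w ≠ r → parent w = v →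
          s(w, parent w) ∈ SimpleGraph.Subgraph.edgeSet s →
          s(v, parent v) ∈ SimpleGraph.Subgraph.edgeSet s →
          t s(w, parent w) s < t s(v, parent v) s) ∧
      -- (iii) the edge from `v` to its parent is scheduled by round `h v + i`,
      -- where `i` is the rank of `s` in the `≺`-ordering of the subtrees containing it
      (∀ s ∈ S, ∀ v : V, v ≠ r → s(v, parent v) ∈ SimpleGraph.Subgraph.edgeSet s →
          t s(v, parent v) s ≤ h v +
            {s' | s' ∈ S ∧ s(v, parent v) ∈ SimpleGraph.Subgraph.edgeSet s' ∧
              (prec s' s ∨ s' = s)}.ncard) := by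
  intro prec hprec
  have := isStrictOrder_of_iff_lex hprec
  have hfin : ∀ e : Sym2 V, {x | x ∈ S ∧ e ∈ x.edgeSet}.Finite :=
    fun e ↦ S.finite_toSet.subset fun _ hx ↦ hx.1
  -- heights increase towards the root, so `(e.map h).inf` is the height of the lower endpoint
  have hlow : ∀ v, v ≠ r → (s(v, parent v).map h).inf = h v := fun v hv ↦
    min_eq_left (hT.height_lt_height_parent hparent hheight hv).le
  refine ⟨fun e s ↦ (e.map h).inf + rankAmong (fun x ↦ x ∈ S ∧ e ∈ x.edgeSet) prec s,
    fun e s hs he ↦ ?_, fun e s hs s' hs' he he' hss' ↦ ?_, fun s hs v w hv hw hwv hew hev ↦ ?_,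
    fun s hs v hv _ ↦ ?_⟩
  · have := rankAmong_pos (prec := prec) (hfin e) ⟨hs, he⟩
    dsimp only
    omega
  · have := (rankAmong_injOn (hfin e) fun a b ha hb ↦
      prec_or_prec_of_iff_lex hprec hident ha.1 hb.1).ne ⟨hs, he⟩ ⟨hs', he'⟩ hss'
    dsimp only
    omega
  · subst hwv
    have hrank : rankAmong (fun x ↦ x ∈ S ∧ s(w, parent w) ∈ x.edgeSet) prec s ≤
        rankAmong (fun x ↦ x ∈ S ∧ s(parent w, parent (parent w)) ∈ x.edgeSet) prec s := by
      refine rankAmong_mono (hfin _) fun x ⟨hxS, hxw⟩ hxs ↦ ⟨hxS, ?_⟩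
      have := le_of_iff_lex hprec hxs
      have := (hrt s hs).2 _ (s.mem_edgeSet.mp hev).snd_mem
      have := (hparent _ hv).2
      exact hT.mem_edgeSet_parent_of_dist_lt hparent (hSconn x hxS)
        (x.mem_edgeSet.mp hxw).snd_mem (hrt x hxS).1 (by omega)
    have := hT.height_lt_height_parent hparent hheight hw
    simp only [hlow _ hv, hlow _ hw]
    omega
  · simp only [hlow v hv, rankAmong, and_assoc, le_refl]

theorem stmt4 {V : Type*} [Fintype V] (T : SimpleGraph V) (hT : T.IsTree)
    (r : V) (parent : V → V)
    (hparent : ∀ v, v ≠ r → T.Adj v (parent v) ∧ T.dist r (parent v) + 1 = T.dist r v)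
    -- `h v` is the height of `v`: the maximum distance from `v` to a descendant of `v`
    (h : V → ℕ)
    (hheight : ∀ v, IsGreatest
      {d | ∃ u, T.dist r u = T.dist r v + T.dist v u ∧ d = T.dist v u} (h v))
    -- a finite family of subtrees of `T`
    (S : Finset T.Subgraph) (hSconn : ∀ s ∈ S, SimpleGraph.Subgraph.Connected s)
    -- distinct identifiers
    (ident : T.Subgraph → ℕ) (hident : Set.InjOn ident ↑S)
    -- `rt s` is the root of the subtree `s`: its unique vertex of minimum depth
    (rt : T.Subgraph → V)
    (hrt : ∀ s ∈ S, rt s ∈ SimpleGraph.Subgraph.verts s ∧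
      ∀ u ∈ SimpleGraph.Subgraph.verts s, T.dist r (rt s) ≤ T.dist r u) :
    -- the priority order on subtrees: smaller root depth first, ties broken by identifier
    ∀ prec : T.Subgraph → T.Subgraph → Prop,
      (∀ s s', (prec s s' ↔ T.dist r (rt s) < T.dist r (rt s') ∨
          (T.dist r (rt s) = T.dist r (rt s') ∧ ident s < ident s'))) →
    ∃ t : Sym2 V → T.Subgraph → ℕ,
      -- rounds are positive integers
      (∀ e, ∀ s ∈ S, e ∈ SimpleGraph.Subgraph.edgeSet s → 1 ≤ t e s) ∧
      -- (i) on each fixed edge, the rounds of subtrees containing it are pairwise distinct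
      (∀ e, ∀ s ∈ S, ∀ s' ∈ S, e ∈ SimpleGraph.Subgraph.edgeSet s →
          e ∈ SimpleGraph.Subgraph.edgeSet s' → s ≠ s' → t e s ≠ t e s') ∧
      -- (ii) rounds strictly increase along each subtree towards its root
      (∀ s ∈ S, ∀ v w : V, v ≠ r → w ≠ r → parent w = v →
          s(w, parent w) ∈ SimpleGraph.Subgraph.edgeSet s →
          s(v, parent v) ∈ SimpleGraph.Subgraph.edgeSet s →
          t s(w, parent w) s < t s(v, parent v) s) ∧
      -- (iii) the edge from `v` to its parent is scheduled by round `h v + i`,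
      -- where `i` is the rank of `s` in the `≺`-ordering of the subtrees containing it
      (∀ s ∈ S, ∀ v : V, v ≠ r → s(v, parent v) ∈ SimpleGraph.Subgraph.edgeSet s →
          t s(v, parent v) s ≤ h v +
            {s' | s' ∈ S ∧ s(v, parent v) ∈ SimpleGraph.Subgraph.edgeSet s' ∧
              (prec s' s ∨ s' = s)}.ncard) :=
  stmt4_general T hT r parent hparent h hheight S hSconn ident hident rt hrt
end

section
/- Let G be a finite connected simple graph with parts P_1, …, P_N and a rooted spanning tree T, and suppose H = (H_1, …, H_N) is a T-restricted shortcut with congestion c ≥ 1 and block parameter b. Let U be a set of edges of T such that every edge e ∈ U can see, relative to U, strictly more than 2c distinct parts. Then |U| ≤ N·b/c. -/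
/-!
Count the pairs `(e, i)` with `e ∈ U`, `e` seeing `P i`, and `e ∉ G[P i] + H i`. By congestion at
most `c` of the more than `2c` parts seen by `e` contain `e`, so every `e` lies in more than `c`
pairs. For a fixed `i`, two such edges seeing vertices of the same block of `H i` coincide: the
`H i`-path between the two vertices crosses neither edge, so each seen vertex lies below both
edges, and since the tree path from a seen vertex up to its edge avoids `U`, each edge lies below
the other. So every part lies in at most `b` pairs, and `|U| (c + 1) ≤ N b`.
-/

open SimpleGraph

/-- The edge `e` of the tree `T` (rooted at `r`, with parent function `parent`)
can see the vertex `u` relative to the edge set `U`: `u` lies in the subtree below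
`e` and the `T`-path from `u` to the lower endpoint of `e` contains no edge of `U`. -/
def canSee {V : Type*} (T : SimpleGraph V) (r : V) (parent : V → V)
    (U : Set (Sym2 V)) (e : Sym2 V) (u : V) : Prop :=
  ∃ v : V, v ≠ r ∧ e = s(v, parent v) ∧
    T.dist r u = T.dist r v + T.dist v u ∧
    ∀ p : T.Walk u v, p.IsPath → ∀ e' ∈ p.edges, e' ∉ U

namespace SimpleGraph

variable {V : Type*} {T : SimpleGraph V} {r : V} {parent : V → V}

def IsParentMap (T : SimpleGraph V) (r : V) (parent : V → V) : Prop :=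
  ∀ v, v ≠ r → T.Adj v (parent v) ∧ T.dist r (parent v) + 1 = T.dist r v

/-- `u` lies in the subtree of `T` rooted at `v` (the root of `T` being `r`), in the form used
by `canSee`. -/
def InSubtree (T : SimpleGraph V) (r v u : V) : Prop :=
  T.dist r u = T.dist r v + T.dist v u

namespace IsTree

lemma eq_parent_of_adj_s8 (hT : T.IsTree) (hp : IsParentMap T r parent) {u x : V}
    (hu : u ≠ r) (hadj : T.Adj x u) (hx : T.dist r x + 1 = T.dist r u) : x = parent u := by
  obtain ⟨hpadj, hpd⟩ := hp u hu
  have exists_path_penultimate : ∀ {y} (h : T.Adj y u), T.dist r y + 1 = T.dist r u →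
      ∃ p : T.Walk r u, p.IsPath ∧ p.penultimate = y := fun {y} h hy => by
    obtain ⟨q, hq⟩ := hT.connected.exists_walk_length_eq_dist r y
    exact ⟨q.concat h, (q.concat h).isPath_of_length_eq_dist (by simp [hq, hy]), by simp⟩
  obtain ⟨p, hpath, rfl⟩ := exists_path_penultimate hadj hx
  obtain ⟨p', hpath', hp'u⟩ := exists_path_penultimate hpadj.symm hpd
  rw [← hp'u]
  exact congrArg (fun q : T.Path r u => q.1.penultimate)
    ((hT.isAcyclic.subsingleton_path r u).elim ⟨p, hpath⟩ ⟨p', hpath'⟩)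

lemma inSubtree_parent (hT : T.IsTree) (hp : IsParentMap T r parent) {v u : V}
    (hvu : InSubtree T r v u) (hne : u ≠ v) : InSubtree T r v (parent u) := by
  obtain ⟨q, hq⟩ := hT.connected.exists_walk_length_eq_dist v u
  have hadj : T.Adj q.penultimate u := q.adj_penultimate fun h => hne h.eq.symm
  have hvy : T.dist v q.penultimate ≤ T.dist v u - 1 := by
    simpa [hq] using dist_le q.dropLast
  have hvu1 : 0 < T.dist v u := hT.connected.pos_dist_of_ne hne.symm
  have hry : T.dist r q.penultimate ≤ T.dist r v + T.dist v q.penultimate :=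
    hT.connected.dist_triangle
  have hru : T.dist r u ≤ T.dist r q.penultimate + 1 := by
    simpa [dist_eq_one_iff_adj.mpr hadj] using
      hT.connected.dist_triangle (u := r) (v := q.penultimate) (w := u)
  unfold InSubtree at hvu ⊢
  have hur : u ≠ r := by rintro rfl; simp at hvu; omega
  rw [← hT.eq_parent_of_adj_s8 hp hur hadj (by omega)]
  omega

lemma inSubtree_of_adj (hT : T.IsTree) (hp : IsParentMap T r parent) {v u x : V}
    (hvu : InSubtree T r v u) (hadj : T.Adj u x) (hne : s(u, x) ≠ s(v, parent v)) :
    InSubtree T r v x := by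
  rcases hT.dist_eq_dist_add_one_of_adj r hadj with hux | hxu
  · have hur : u ≠ r := by rintro rfl; simp at hux
    obtain rfl := hT.eq_parent_of_adj_s8 hp hur hadj.symm hux.symm
    exact hT.inSubtree_parent hp hvu (by rintro rfl; exact hne rfl)
  · have hvx : T.dist v x ≤ T.dist v u + 1 := by
      simpa [dist_eq_one_iff_adj.mpr hadj] using
        hT.connected.dist_triangle (u := v) (v := u) (w := x)
    have hrx : T.dist r x ≤ T.dist r v + T.dist v x := hT.connected.dist_triangle
    unfold InSubtree at hvu ⊢
    omega

lemma inSubtree_of_walk (hT : T.IsTree) (hp : IsParentMap T r parent) {v a b : V}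
    (p : T.Walk a b) (hpv : s(v, parent v) ∉ p.edges) (ha : InSubtree T r v a) :
    InSubtree T r v b := by
  induction p with
  | nil => exact ha
  | cons hadj q ih =>
    rw [Walk.edges_cons, List.mem_cons, not_or] at hpv
    exact ih hpv.2 (hT.inSubtree_of_adj hp ha hadj (Ne.symm hpv.1))

lemma inSubtree_antisymm (hT : T.IsTree) {v w : V} (hvw : InSubtree T r v w)
    (hwv : InSubtree T r w v) : v = w := by
  unfold InSubtree at hvw hwv
  have : T.dist v w = T.dist w v := dist_comm
  exact hT.connected.dist_eq_zero_iff.mp (by omega)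

lemma inSubtree_of_forall_isPath_edges_notMem (hT : T.IsTree) (hp : IsParentMap T r parent)
    {U : Set (Sym2 V)} {u v w : V} (hsee : ∀ p : T.Walk u v, p.IsPath → ∀ e ∈ p.edges, e ∉ U)
    (hwU : s(w, parent w) ∈ U) (hwu : InSubtree T r w u) : InSubtree T r w v := by
  by_contra hwv
  obtain ⟨p, hpath, -⟩ := hT.connected.exists_path_of_dist u v
  refine hsee p hpath _ ?_ hwU
  by_contra hpw
  exact hwv (hT.inSubtree_of_walk hp p hpw hwu)

lemma eq_of_canSee_of_reachable (hT : T.IsTree) (hp : IsParentMap T r parent)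
    {U H : Set (Sym2 V)} (hHT : H ⊆ T.edgeSet) {e e' : Sym2 V} (he : e ∈ U) (he' : e' ∈ U)
    (heH : e ∉ H) (he'H : e' ∉ H) {u u' : V} (hu : canSee T r parent U e u)
    (hu' : canSee T r parent U e' u') (hreach : (fromEdgeSet H).Reachable u u') : e = e' := by
  obtain ⟨v, -, rfl, hvu, hsee⟩ := hu
  obtain ⟨v', -, rfl, hv'u', hsee'⟩ := hu'
  obtain ⟨W⟩ := hreach
  have hHT' : fromEdgeSet H ≤ T := (fromEdgeSet_le T).mpr fun e he => hHT he.1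
  set Q := W.mapLe hHT'
  have hQH : ∀ e ∈ Q.edges, e ∈ H := fun e he => by
    rw [Walk.edges_mapLe_eq_edges] at he
    have hW := W.edges_subset_edgeSet he
    rw [edgeSet_fromEdgeSet] at hW
    exact hW.1
  have hvu' : InSubtree T r v u' := hT.inSubtree_of_walk hp Q (fun h => heH (hQH _ h)) hvu
  have hv'u : InSubtree T r v' u :=
    hT.inSubtree_of_walk hp Q.reverse (fun h => he'H (hQH _ (by simpa using h))) hv'u'
  rw [hT.inSubtree_antisymm (hT.inSubtree_of_forall_isPath_edges_notMem hp hsee' he hvu')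
    (hT.inSubtree_of_forall_isPath_edges_notMem hp hsee he' hv'u)]

lemma card_le_numBlocks [Finite V] (hT : T.IsTree) (hp : IsParentMap T r parent)
    {U H : Set (Sym2 V)} (hHT : H ⊆ T.edgeSet) (P : Set V) {s : Finset (Sym2 V)}
    (hsU : ∀ e ∈ s, e ∈ U) (hs : ∀ e ∈ s, e ∉ H ∧ ∃ u ∈ P, canSee T r parent U e u) :
    s.card ≤ numBlocks P H := by
  set K := fromEdgeSet H
  have hfin : {C : K.ConnectedComponent | ∃ v ∈ P, K.connectedComponentMk v = C}.Finite :=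
    Set.toFinite _
  rw [numBlocks, Set.ncard_eq_toFinset_card _ hfin]
  refine Finset.card_le_card_of_forall_subsingleton
    (fun e C => ∃ u ∈ P, canSee T r parent U e u ∧ K.connectedComponentMk u = C)
    (fun e he => ?_) (fun C _ => ?_)
  · obtain ⟨u, huP, hu⟩ := (hs e he).2
    exact ⟨_, hfin.mem_toFinset.mpr ⟨u, huP, rfl⟩, u, huP, hu, rfl⟩
  · rintro e ⟨he, u, -, hu, rfl⟩ e' ⟨he', u', -, hu', huu'⟩
    exact hT.eq_of_canSee_of_reachable hp hHT (hsU e he) (hsU e' he') (hs e he).1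
      (hs e' he').1 hu hu' (ConnectedComponent.eq.mp huu'.symm)

end IsTree

end SimpleGraph

theorem stmt8_general {V : Type*} [Fintype V] (G : SimpleGraph V)
    (T : SimpleGraph V) (hT : T.IsTree) (hTG : T ≤ G)
    (r : V) (parent : V → V)
    (hparent : ∀ v, v ≠ r → T.Adj v (parent v) ∧ T.dist r (parent v) + 1 = T.dist r v)
    (N : ℕ) (P : Fin N → Set V)
    (c b : ℕ)
    -- a `T`-restricted shortcut with congestion `c` and block parameter `b`
    (H : Fin N → Set (Sym2 V))
    (hTres : ∀ i, H i ⊆ T.edgeSet)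
    (hcong : ∀ e ∈ G.edgeSet, {i : Fin N | e ∈ partEdges G (P i) (H i)}.ncard ≤ c)
    (hblock : ∀ i, numBlocks (P i) (H i) ≤ b)
    -- `U` is a set of tree edges, each of which can see more than `2c` parts relative to `U`
    (U : Set (Sym2 V)) (hUT : U ⊆ T.edgeSet)
    (hU : ∀ e ∈ U, 2 * c < {i : Fin N | ∃ u ∈ P i, canSee T r parent U e u}.ncard) :
    -- then `|U| ≤ N·b/c`
    U.ncard * c ≤ N * b := by
  classical
  let R : Sym2 V → Fin N → Prop := fun e i =>
    (∃ u ∈ P i, canSee T r parent U e u) ∧ e ∉ partEdges G (P i) (H i)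
  set S := (Set.toFinite U).toFinset
  have hpartsAbove (e : Sym2 V) (he : e ∈ U) : c + 1 ≤ {i | R e i}.ncard := by
    have := Set.ncard_le_ncard_sdiff_add_ncard {i : Fin N | ∃ u ∈ P i, canSee T r parent U e u}
      {i | e ∈ partEdges G (P i) (H i)}
    have := hcong e (edgeSet_mono hTG (hUT he))
    have := hU e he
    change c + 1 ≤ ({i | ∃ u ∈ P i, canSee T r parent U e u} \
      {i | e ∈ partEdges G (P i) (H i)}).ncard
    omega
  have hedgesBelow (i : Fin N) : (S.bipartiteBelow R i).card ≤ b := by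
    refine le_trans (hT.card_le_numBlocks (U := U) hparent (hTres i) (P i) (fun e he => ?_)
      fun e he => ?_) (hblock i)
    all_goals rw [Finset.mem_bipartiteBelow, Set.Finite.mem_toFinset] at he
    · exact he.1
    · exact ⟨fun h => he.2.2 (Or.inr h), he.2.1⟩
  have hdouble : S.card * (c + 1) ≤ Finset.univ.card * b :=
    Finset.card_mul_le_card_mul R (fun e he => by
      rw [← Set.ncard_coe_finset, Finset.coe_bipartiteAbove]
      simpa using hpartsAbove e ((Set.toFinite U).mem_toFinset.mp he))
      fun i _ => hedgesBelow i
  calc U.ncard * c ≤ S.card * (c + 1) := by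
        rw [Set.ncard_eq_toFinset_card U]
        exact Nat.mul_le_mul_left _ c.le_succ
    _ ≤ N * b := by simpa using hdouble

theorem stmt8 {V : Type*} [Fintype V] (G : SimpleGraph V) (hG : G.Connected)
    (T : SimpleGraph V) (hT : T.IsTree) (hTG : T ≤ G)
    (r : V) (parent : V → V)
    (hparent : ∀ v, v ≠ r → T.Adj v (parent v) ∧ T.dist r (parent v) + 1 = T.dist r v)
    (N : ℕ) (P : Fin N → Set V)
    (hPdisj : ∀ i j, i ≠ j → Disjoint (P i) (P j))
    (hPne : ∀ i, (P i).Nonempty)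
    (hPconn : ∀ i, (G.induce (P i)).Connected)
    (c b : ℕ) (hc : 1 ≤ c)
    -- a `T`-restricted shortcut with congestion `c` and block parameter `b`
    (H : Fin N → Set (Sym2 V))
    (hTres : ∀ i, H i ⊆ T.edgeSet)
    (hcong : ∀ e ∈ G.edgeSet, {i : Fin N | e ∈ partEdges G (P i) (H i)}.ncard ≤ c)
    (hblock : ∀ i, numBlocks (P i) (H i) ≤ b)
    -- `U` is a set of tree edges, each of which can see more than `2c` parts relative to `U`
    (U : Set (Sym2 V)) (hUT : U ⊆ T.edgeSet)
    (hU : ∀ e ∈ U, 2 * c < {i : Fin N | ∃ u ∈ P i, canSee T r parent U e u}.ncard) :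
    -- then `|U| ≤ N·b/c`
    U.ncard * c ≤ N * b :=
  stmt8_general G T hT hTG r parent hparent N P c b H hTres hcong hblock U hUT hU
end
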